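/- Suppose a signal S on ℤ/Nℤ is supported on B frequencies in its Fourier transform, and S₁(t) = S(t)·χ_T(t) where for every ω ≠ 0, |χ̂_T(ω)| ≤ √λ and χ̂_T(0) = 1 (Fourier transform normalized so that Ŝ₁ = Ŝ * χ̂_T as a convolution over ℤ/Nℤ). Then for every frequency ω, |Ŝ(ω) - Ŝ₁(ω)| ≤ √(Bλ)·‖S‖₂. -/

import Mathlib

open Finset

/-!
Since `χ̂(0) = 1`, the term `w' = ω` of the convolution `Ŝ₁(ω) = ∑ Ŝ(w') χ̂(ω - w')` is exactly
`Ŝ(ω)`, so `Ŝ(ω) - Ŝ₁(ω)` only involves values of `χ̂` off `0`, each of size at most `√λ`.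
Hence `|Ŝ(ω) - Ŝ₁(ω)| ≤ √λ ∑_{w ∈ Ω} |Ŝ(w)|`, and Cauchy–Schwarz over the `B` frequencies of `Ω`
bounds the last sum by `√B ‖S‖₂`.
-/

lemma Real.sum_le_sqrt_card_mul_sqrt_sum_sq {ι : Type*} (s : Finset ι) (g : ι → ℝ) :
    ∑ i ∈ s, g i ≤ √(#s : ℝ) * √(∑ i ∈ s, g i ^ 2) := by
  simpa using Real.sum_mul_le_sqrt_mul_sqrt s (fun _ ↦ 1) g

section Convolution

variable {G R : Type*} [AddGroup G] [DecidableEq G]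

lemma sub_sum_mul_sub_eq_neg_sum_erase [Ring R] {s : Finset G} {f k : G → R}
    (hf : ∀ w ∉ s, f w = 0) (hk : k 0 = 1) (ω : G) :
    f ω - ∑ w ∈ s, f w * k (ω - w) = -∑ w ∈ s.erase ω, f w * k (ω - w) := by
  by_cases hω : ω ∈ s
  · rw [← add_sum_erase _ _ hω, sub_self, hk, mul_one]
    abel
  · rw [hf ω hω, erase_eq_of_notMem hω, zero_sub]

lemma norm_sum_erase_mul_sub_le [NormedRing R] (s : Finset G) (f k : G → R) {c : ℝ}
    (hc : 0 ≤ c) (hk : ∀ w ≠ 0, ‖k w‖ ≤ c) (ω : G) :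
    ‖∑ w ∈ s.erase ω, f w * k (ω - w)‖ ≤ c * ∑ w ∈ s, ‖f w‖ := by
  rw [mul_sum]
  calc ‖∑ w ∈ s.erase ω, f w * k (ω - w)‖
      ≤ ∑ w ∈ s.erase ω, ‖f w‖ * ‖k (ω - w)‖ :=
        (norm_sum_le _ _).trans (sum_le_sum fun w _ ↦ norm_mul_le _ _)
    _ ≤ ∑ w ∈ s.erase ω, c * ‖f w‖ := sum_le_sum fun w hw ↦ by
        rw [mul_comm]
        exact mul_le_mul_of_nonneg_right
          (hk _ (sub_ne_zero.mpr (ne_of_mem_erase hw).symm)) (norm_nonneg _)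
    _ ≤ ∑ w ∈ s, c * ‖f w‖ :=
        sum_le_sum_of_subset_of_nonneg (erase_subset _ _) fun _ _ _ ↦ by positivity

end Convolution

theorem stmt_4_general (N B : ℕ) (lam : ℝ)
    (Shat : ZMod N → ℂ) (Ωs : Finset (ZMod N)) (hcard : Ωs.card = B)
    (hsupp : ∀ w : ZMod N, w ∉ Ωs → Shat w = 0)
    (χhat : ZMod N → ℂ)
    (hχ0 : χhat 0 = 1)
    (hχ : ∀ w : ZMod N, w ≠ 0 → ‖χhat w‖ ≤ Real.sqrt lam)
    (S1hat : ZMod N → ℂ)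
    (hS1 : ∀ w : ZMod N, S1hat w = ∑ w' ∈ Ωs, Shat w' * χhat (w - w'))
    (normS : ℝ) (hnorm : normS = Real.sqrt (∑ w ∈ Ωs, ‖Shat w‖ ^ 2)) :
    ∀ ω : ZMod N, ‖Shat ω - S1hat ω‖ ≤ Real.sqrt (B * lam) * normS := by
  intro ω
  have hCS : ∑ w ∈ Ωs, ‖Shat w‖ ≤ √(B : ℝ) * normS := by
    rw [hnorm, ← hcard]
    exact Real.sum_le_sqrt_card_mul_sqrt_sum_sq _ _
  calc ‖Shat ω - S1hat ω‖
      = ‖∑ w ∈ Ωs.erase ω, Shat w * χhat (ω - w)‖ := by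
        rw [hS1, sub_sum_mul_sub_eq_neg_sum_erase hsupp hχ0, norm_neg]
    _ ≤ √lam * ∑ w ∈ Ωs, ‖Shat w‖ :=
        norm_sum_erase_mul_sub_le _ _ _ (Real.sqrt_nonneg _) hχ ω
    _ ≤ √lam * (√(B : ℝ) * normS) := by gcongr
    _ = √(B * lam) * normS := by
        rw [Real.sqrt_mul (Nat.cast_nonneg _)]
        ring

/-- If `S` has Fourier support on a set `Ω` of `B` frequencies, `χ̂_T(0) = 1` and
`|χ̂_T(ω)| ≤ √λ` for `ω ≠ 0`, and `Ŝ₁ = Ŝ * χ̂_T`, then for every frequency `ω`,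
`|Ŝ(ω) - Ŝ₁(ω)| ≤ √(Bλ)·‖S‖₂`. -/
theorem stmt_4 (N B : ℕ) [NeZero N] (lam : ℝ) (hlam : 0 ≤ lam)
    (Shat : ZMod N → ℂ) (Ωs : Finset (ZMod N)) (hcard : Ωs.card = B)
    (hsupp : ∀ w : ZMod N, w ∉ Ωs → Shat w = 0)
    (χhat : ZMod N → ℂ)
    (hχ0 : χhat 0 = 1)
    (hχ : ∀ w : ZMod N, w ≠ 0 → ‖χhat w‖ ≤ Real.sqrt lam)
    (S1hat : ZMod N → ℂ)
    (hS1 : ∀ w : ZMod N, S1hat w = ∑ w' ∈ Ωs, Shat w' * χhat (w - w'))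
    (normS : ℝ) (hnorm : normS = Real.sqrt (∑ w ∈ Ωs, ‖Shat w‖ ^ 2)) :
    ∀ ω : ZMod N, ‖Shat ω - S1hat ω‖ ≤ Real.sqrt (B * lam) * normS :=
  stmt_4_general N B lam Shat Ωs hcard hsupp χhat hχ0 hχ S1hat hS1 normS hnorm
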